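/- Let U be a bounded operator on l²(ℕ) and fix n ∈ ℕ. Then ‖P_n U* P_m U P_n − P_n U* U P_n‖ ≤ Σ_{j=m+1}^∞ ⟨U P_n U* e_j, e_j⟩, and this bound tends to 0 as m → ∞; in particular P_n U* P_m U P_n converges in operator norm to P_n U* U P_n as m → ∞. -/

import Mathlib

noncomputable section
open MeasureTheory ContinuousLinearMap Filter Topology
open scoped InnerProductSpace

/-- The sequence space `ℓ²(ℕ)`. -/
abbrev H2 : Type := lp (fun _ : ℕ => ℂ) 2

/-- The span of the first `n` canonical basis vectors `e_0, …, e_{n-1}` of `ℓ²(ℕ)`. -/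
def Ksub (n : ℕ) : Submodule ℂ H2 :=
  Submodule.span ℂ ((fun i => lp.single 2 i (1:ℂ)) '' (Set.Iio n))

instance (n : ℕ) : FiniteDimensional ℂ (Ksub n) :=
  FiniteDimensional.span_of_finite ℂ ((Set.finite_Iio n).image _)

/-- The coordinate projection `P_n` onto the span of the first `n` basis vectors. -/
def Pn (n : ℕ) : H2 →L[ℂ] H2 :=
  (Ksub n).subtypeL.comp ((Ksub n).orthogonalProjectionOnto)

/-- The compression of an operator `T` to the range of `P_n`, as an operator on `Ksub n`. -/
def compK (n : ℕ) (T : H2 →L[ℂ] H2) : Ksub n →L[ℂ] Ksub n :=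
  ((Ksub n).orthogonalProjectionOnto).comp (T.comp (Ksub n).subtypeL)

/-- The compression of `U* P_m U` to the range of `P_n`, i.e. `P_n U* P_m U P_n` viewed
as an operator on `Ksub n`. -/
def compKm (n m : ℕ) (U : H2 →L[ℂ] H2) : Ksub n →L[ℂ] Ksub n :=
  compK n ((ContinuousLinearMap.adjoint U).comp ((Pn m).comp U))

/-- The uneven finite section `P_n U* P_m U P_n` as an operator on all of `ℓ²(ℕ)`. -/
def Sec (n m : ℕ) (U : H2 →L[ℂ] H2) : H2 →L[ℂ] H2 :=
  (Pn n).comp ((ContinuousLinearMap.adjoint U).comp ((Pn m).comp (U.comp (Pn n))))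

/-- The section `P_n U* U P_n` as an operator on all of `ℓ²(ℕ)`. -/
def SecInf (n : ℕ) (U : H2 →L[ℂ] H2) : H2 →L[ℂ] H2 :=
  (Pn n).comp ((ContinuousLinearMap.adjoint U).comp (U.comp (Pn n)))

/-- `P_n U* P_m U P_n^⊥` as an operator on `ℓ²(ℕ)`. -/
def SecPerp (n m : ℕ) (U : H2 →L[ℂ] H2) : H2 →L[ℂ] H2 :=
  (Pn n).comp ((ContinuousLinearMap.adjoint U).comp ((Pn m).comp
    (U.comp (ContinuousLinearMap.id ℂ H2 - Pn n))))

/-- The operator `(P_n U* P_m U P_n|_{P_n ℓ²})⁻¹ P_n U* P_m U P_n^⊥`, where `Ainv` is the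
inverse of the finite section on `Ksub n`. -/
def Kop (n m : ℕ) (U : H2 →L[ℂ] H2) (Ainv : Ksub n →L[ℂ] Ksub n) : H2 →L[ℂ] H2 :=
  (Ksub n).subtypeL.comp (Ainv.comp (((Ksub n).orthogonalProjectionOnto).comp
    ((ContinuousLinearMap.adjoint U).comp ((Pn m).comp
      (U.comp (ContinuousLinearMap.id ℂ H2 - Pn n))))))

/-!
Put `A = (1 - P_m) U P_n`. Then `P_n U* P_m U P_n - P_n U* U P_n = -A* A`, whose norm is `‖A‖²`
by the C*-identity. For `j ≥ m` the `j`-th coordinate of `A x` is `⟨P_n U* e_j, x⟩` (and it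
vanishes for `j < m`), so Cauchy–Schwarz gives `‖A x‖² ≤ (Σ_{j ≥ m} ‖P_n U* e_j‖²) ‖x‖²`, and
`‖P_n U* e_j‖² = ⟨U P_n U* e_j, e_j⟩`. These numbers are summable, since
`Σ_j ‖P_n U* e_j‖² = Σ_{i < n} ‖U e_i‖²`, so their tails tend to `0`.
-/

open scoped ComplexConjugate

section TailSums

variable {G : Type*} [AddCommGroup G] [TopologicalSpace G] [IsTopologicalAddGroup G] [T2Space G]

theorem tsum_ite_le_eq_tsum_nat_add (f : ℕ → G) (m : ℕ) :
    ∑' j, (if m ≤ j then f j else 0) = ∑' k, f (k + m) := by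
  have hhead : ∑ i ∈ Finset.range m, (if m ≤ i then f i else 0) = 0 :=
    Finset.sum_eq_zero fun i hi => if_neg (by simpa using hi)
  refine tsum_eq_tsum_of_hasSum_iff_hasSum fun {a} => ?_
  have hshift := hasSum_nat_add_iff (f := fun j => if m ≤ j then f j else 0) (g := a) m
  rw [hhead, add_zero] at hshift
  simpa using hshift.symm

theorem tendsto_tsum_ite_le_atTop_zero (f : ℕ → G) :
    Tendsto (fun m => ∑' j, if m ≤ j then f j else 0) atTop (𝓝 0) := by
  simpa only [tsum_ite_le_eq_tsum_nat_add] using tendsto_sum_nat_add f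

end TailSums

section lpTwo

variable {ι : Type*} {E : ι → Type*} [∀ i, NormedAddCommGroup (E i)]

theorem lp.norm_sq_eq_tsum (f : lp E 2) : ‖f‖ ^ 2 = ∑' i, ‖f i‖ ^ 2 := by
  simpa using lp.norm_rpow_eq_tsum (p := 2) (by norm_num) f

theorem lp.summable_norm_sq (f : lp E 2) : Summable fun i => ‖f i‖ ^ 2 := by
  simpa using (lp.memℓp f).summable (p := 2) (by norm_num)

end lpTwo

theorem ContinuousLinearMap.opNorm_sq_le_of_norm_apply_sq_le {𝕜 E F : Type*}
    [NontriviallyNormedField 𝕜] [SeminormedAddCommGroup E] [SeminormedAddCommGroup F]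
    [NormedSpace 𝕜 E] [NormedSpace 𝕜 F] (A : E →L[𝕜] F) {C : ℝ} (hC : 0 ≤ C)
    (h : ∀ x, ‖A x‖ ^ 2 ≤ C * ‖x‖ ^ 2) : ‖A‖ ^ 2 ≤ C := by
  have hA : ‖A‖ ≤ √C := A.opNorm_le_bound (Real.sqrt_nonneg C) fun x => by
    rw [← Real.sqrt_sq (norm_nonneg x), ← Real.sqrt_mul hC]
    exact Real.le_sqrt_of_sq_le (h x)
  calc ‖A‖ ^ 2 ≤ √C ^ 2 := pow_le_pow_left₀ (norm_nonneg A) hA 2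
    _ = C := Real.sq_sqrt hC

theorem re_inner_comp_starProjection_comp_adjoint {𝕜 E F : Type*} [RCLike 𝕜]
    [NormedAddCommGroup E] [InnerProductSpace 𝕜 E] [CompleteSpace E] [NormedAddCommGroup F]
    [InnerProductSpace 𝕜 F] [CompleteSpace F] (K : Submodule 𝕜 E) [K.HasOrthogonalProjection]
    (T : E →L[𝕜] F) (y : F) :
    RCLike.re ⟪(T.comp (K.starProjection.comp (adjoint T))) y, y⟫_𝕜
      = ‖K.starProjection (adjoint T y)‖ ^ 2 := by
  rw [comp_apply, comp_apply, ← adjoint_inner_right]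
  exact K.re_inner_starProjection_eq_normSq _

theorem Pn_eq_starProjection (n : ℕ) : Pn n = (Ksub n).starProjection := rfl

theorem adjoint_Pn (n : ℕ) : adjoint (Pn n) = Pn n :=
  (isSelfAdjoint_starProjection (Ksub n)).adjoint_eq

theorem lp_single_mem_Ksub {n i : ℕ} (hi : i < n) (c : ℂ) : lp.single 2 i c ∈ Ksub n := by
  have hc : (lp.single 2 i c : H2) = c • lp.single 2 i (1 : ℂ) := by
    simpa using lp.single_smul (E := fun _ : ℕ => ℂ) 2 i c (1 : ℂ)
  rw [hc]
  exact Submodule.smul_mem _ _ (Submodule.subset_span ⟨i, hi, rfl⟩)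

theorem mem_Ksub_orthogonal {n : ℕ} {x : H2} (hx : ∀ i < n, x i = 0) : x ∈ (Ksub n)ᗮ := by
  have hortho : (ℂ ∙ x) ⟂ Ksub n := Submodule.isOrtho_span.2 <| by
    rintro _ rfl _ ⟨i, hi, rfl⟩
    simp [lp.inner_single_right, hx i hi]
  exact hortho (Submodule.mem_span_singleton_self x)

theorem sum_lp_single_apply (n : ℕ) (x : H2) (j : ℕ) :
    (∑ i ∈ Finset.range n, lp.single 2 i (x i) : H2) j = if j < n then x j else 0 := by
  rw [lp.coeFn_sum, Finset.sum_apply]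
  simp [Pi.single_apply]

theorem Pn_apply (n : ℕ) (x : H2) : Pn n x = ∑ i ∈ Finset.range n, lp.single 2 i (x i) := by
  refine Submodule.eq_starProjection_of_mem_orthogonal
    (Submodule.sum_mem _ fun i hi => lp_single_mem_Ksub (Finset.mem_range.mp hi) _)
    (mem_Ksub_orthogonal fun i hi => ?_)
  rw [lp.coeFn_sub, Pi.sub_apply, sum_lp_single_apply, if_pos hi, sub_self]

theorem Pn_apply_apply (n : ℕ) (x : H2) (j : ℕ) : Pn n x j = if j < n then x j else 0 := by
  rw [Pn_apply, sum_lp_single_apply]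

theorem norm_Pn_apply_sq (n : ℕ) (x : H2) : ‖Pn n x‖ ^ 2 = ∑ i ∈ Finset.range n, ‖x i‖ ^ 2 := by
  simpa [Pn_apply] using lp.norm_sum_single (p := 2) (by norm_num) x (Finset.range n)

theorem norm_adjoint_lp_single_apply (U : H2 →L[ℂ] H2) (i j : ℕ) :
    ‖adjoint U (lp.single 2 j 1) i‖ = ‖U (lp.single 2 i 1) j‖ := by
  have hcoord : adjoint U (lp.single 2 j 1) i = conj (U (lp.single 2 i 1) j) := by
    have h := adjoint_inner_right U (lp.single 2 i 1) (lp.single 2 j 1)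
    simp only [lp.inner_single_left, lp.inner_single_right] at h
    simpa using h
  rw [hcoord, RCLike.norm_conj]

theorem summable_norm_Pn_adjoint_lp_single_sq (U : H2 →L[ℂ] H2) (n : ℕ) :
    Summable fun j => ‖Pn n (adjoint U (lp.single 2 j 1))‖ ^ 2 := by
  simp_rw [norm_Pn_apply_sq, norm_adjoint_lp_single_apply]
  exact summable_sum fun i _ => lp.summable_norm_sq _

theorem norm_apply_Pn_apply_le (U : H2 →L[ℂ] H2) (n : ℕ) (x : H2) (j : ℕ) :
    ‖U (Pn n x) j‖ ≤ ‖Pn n (adjoint U (lp.single 2 j 1))‖ * ‖x‖ := by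
  have hcoord : U (Pn n x) j = ⟪Pn n (adjoint U (lp.single 2 j 1)), x⟫_ℂ := by
    rw [Pn_eq_starProjection, Submodule.inner_starProjection_left_eq_right, adjoint_inner_left,
      lp.inner_single_left]
    simp
  rw [hcoord]
  exact norm_inner_le_norm _ _

/-- `A = (1 - P_m) U P_n`. -/
def SecCompl (n m : ℕ) (U : H2 →L[ℂ] H2) : H2 →L[ℂ] H2 :=
  (Ksub m)ᗮ.starProjection ∘L U ∘L Pn n

theorem Sec_sub_SecInf (n m : ℕ) (U : H2 →L[ℂ] H2) :
    Sec n m U - SecInf n U = -(adjoint (SecCompl n m U) ∘L SecCompl n m U) := by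
  have hQ : adjoint (Ksub m)ᗮ.starProjection = (Ksub m)ᗮ.starProjection :=
    (isSelfAdjoint_starProjection _).adjoint_eq
  have hPP (y : H2) : Pn m (Pn m y) = Pn m y :=
    DFunLike.congr_fun (Submodule.isIdempotentElem_starProjection _).eq y
  refine ContinuousLinearMap.ext fun x => ?_
  simp [SecCompl, Sec, SecInf, adjoint_comp, hQ, hPP, adjoint_Pn, ← Pn_eq_starProjection]

theorem norm_Sec_sub_SecInf (n m : ℕ) (U : H2 →L[ℂ] H2) :
    ‖Sec n m U - SecInf n U‖ = ‖SecCompl n m U‖ ^ 2 := by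
  rw [Sec_sub_SecInf, norm_neg, norm_adjoint_comp_self, sq]

theorem SecCompl_apply_apply (n m : ℕ) (U : H2 →L[ℂ] H2) (x : H2) (j : ℕ) :
    SecCompl n m U x j = if m ≤ j then U (Pn n x) j else 0 := by
  rw [SecCompl, comp_apply, comp_apply, Submodule.starProjection_orthogonal_val, lp.coeFn_sub,
    Pi.sub_apply, ← Pn_eq_starProjection, Pn_apply_apply]
  split_ifs <;> first | omega | simp

theorem norm_SecCompl_sq_le (n m : ℕ) (U : H2 →L[ℂ] H2) :
    ‖SecCompl n m U‖ ^ 2 ≤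
      ∑' j, if m ≤ j then ‖Pn n (adjoint U (lp.single 2 j 1))‖ ^ 2 else 0 := by
  set t : ℕ → ℝ := fun j => if m ≤ j then ‖Pn n (adjoint U (lp.single 2 j 1))‖ ^ 2 else 0
  have ht_nonneg (j : ℕ) : 0 ≤ t j := by dsimp only [t]; positivity
  have ht : Summable t :=
    (summable_norm_Pn_adjoint_lp_single_sq U n).of_nonneg_of_le ht_nonneg
      fun j => by dsimp only [t]; split_ifs; exacts [le_rfl, by positivity]
  refine (SecCompl n m U).opNorm_sq_le_of_norm_apply_sq_le (tsum_nonneg ht_nonneg) fun x => ?_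
  have hterm (j : ℕ) : ‖SecCompl n m U x j‖ ^ 2 ≤ t j * ‖x‖ ^ 2 := by
    rw [SecCompl_apply_apply]
    dsimp only [t]
    split_ifs
    · rw [← mul_pow]
      exact pow_le_pow_left₀ (norm_nonneg _) (norm_apply_Pn_apply_le U n x j) 2
    · simp
  calc ‖SecCompl n m U x‖ ^ 2 = ∑' j, ‖SecCompl n m U x j‖ ^ 2 := lp.norm_sq_eq_tsum _
    _ ≤ ∑' j, t j * ‖x‖ ^ 2 :=
      (lp.summable_norm_sq _).tsum_le_tsum hterm (ht.mul_right _)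
    _ = (∑' j, t j) * ‖x‖ ^ 2 := tsum_mul_right

/-- For fixed `n`, `‖P_n U* P_m U P_n − P_n U* U P_n‖` is bounded by the
tail `Σ_{j ≥ m} ⟨U P_n U* e_j, e_j⟩` of the trace of the trace-class operator `U P_n U*`;
this tail tends to `0`, so `P_n U* P_m U P_n → P_n U* U P_n` in operator norm. -/
theorem section_tail_bound_and_convergence (U : H2 →L[ℂ] H2) (n : ℕ) :
    (∀ m : ℕ, ‖Sec n m U - SecInf n U‖ ≤
      ∑' j : ℕ, if m ≤ j then
        (⟪(U.comp ((Pn n).comp (ContinuousLinearMap.adjoint U))) (lp.single 2 j 1),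
          lp.single 2 j 1⟫_ℂ).re else 0) ∧
    Tendsto (fun m : ℕ => ∑' j : ℕ, if m ≤ j then
        (⟪(U.comp ((Pn n).comp (ContinuousLinearMap.adjoint U))) (lp.single 2 j 1),
          lp.single 2 j 1⟫_ℂ).re else 0) atTop (𝓝 0) ∧
    Tendsto (fun m : ℕ => Sec n m U) atTop (𝓝 (SecInf n U)) := by
  have hdiag (j : ℕ) : (⟪(U.comp ((Pn n).comp (adjoint U))) (lp.single 2 j 1),
      lp.single 2 j 1⟫_ℂ).re = ‖Pn n (adjoint U (lp.single 2 j 1))‖ ^ 2 :=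
    re_inner_comp_starProjection_comp_adjoint (Ksub n) U _
  simp only [hdiag]
  have hbound (m : ℕ) := (norm_Sec_sub_SecInf n m U).trans_le (norm_SecCompl_sq_le n m U)
  have htail := tendsto_tsum_ite_le_atTop_zero fun j => ‖Pn n (adjoint U (lp.single 2 j 1))‖ ^ 2
  exact ⟨hbound, htail, tendsto_iff_norm_sub_tendsto_zero.2 <|
    squeeze_zero (fun _ => norm_nonneg _) hbound htail⟩
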